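/- arXiv:2309.02644 — 3 statements merged into one kernel-verified Lean document; each statement's English description precedes it below -/
import Mathlib

section
/- Let 1 ≤ r' < r and let a ∈ N^{r'}_q. For a nonempty finite subset σ ⊆ N^{r−r'}_q, write a + σ = {a + v : v ∈ σ} ⊆ N^r_q. Then σ is a Scarf face of E_q^{r−r'} if and only if a + σ is a Scarf face of E_q^r. In particular, translation by a maps the Scarf complex of E_q^{r−r'} into the Scarf complex of E_q^r. -/
/-!
Translation by `a` adds `∑_{i ∈ A} a i` to every coordinate of the label, so labels of
translates agree iff the labels agree; this gives one direction at once. For the other, a set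
`τ ⊆ N^r_q` with the label of `a + σ` must itself lie above `a`: the label at `[q] \ {i}` is
`r - min_{c ∈ τ} c i`, so the labels determine the coordinatewise minimum. Hence `τ` is a
translate `a + τ'`, and `τ'` has the label of `σ`.
-/

open Finset

/-- The exponent of the variable `x_A` in `lcm(ε^a : a ∈ σ)`:
`eLabel σ A = max_{a ∈ σ} ∑_{i ∈ A} a i` (and `0` if `σ = ∅`). -/
def eLabel {q : ℕ} (σ : Finset (Fin q → ℕ)) (A : Finset (Fin q)) : ℕ :=
  σ.sup (fun a => ∑ i ∈ A, a i)

/-- `σ` is a face of the Scarf complex of `E_q^r`: a nonempty subset of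
`N^r_q` such that every nonempty `τ ⊆ N^r_q` with the same label equals `σ`. -/
def IsScarf (q r : ℕ) (σ : Finset (Fin q → ℕ)) : Prop :=
  σ.Nonempty ∧ (∀ a ∈ σ, ∑ i, a i = r) ∧
    ∀ τ : Finset (Fin q → ℕ), τ.Nonempty → (∀ a ∈ τ, ∑ i, a i = r) →
      (∀ A : Finset (Fin q), A.Nonempty → eLabel τ A = eLabel σ A) → τ = σ

/-- The set `aU = {c ∈ N^r_q : a i ≤ c i ≤ a i + 1 for all i}`, i.e. the
vertex set of the face `ε^a · U_q^{r-|a|}` of the Taylor complex of `E_q^r`. -/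
def aUF (q r : ℕ) (a : Fin q → ℕ) : Finset (Fin q → ℕ) :=
  (Finset.Icc a (a + 1)).filter (fun c => ∑ i, c i = r)

lemma eLabel_empty {q : ℕ} (s : Finset (Fin q → ℕ)) : eLabel s ∅ = 0 := by
  simp [eLabel]

lemma eLabel_image_add {q : ℕ} (a : Fin q → ℕ) {s : Finset (Fin q → ℕ)} (hs : s.Nonempty)
    (A : Finset (Fin q)) :
    eLabel (s.image (a + ·)) A = ∑ i ∈ A, a i + eLabel s A := by
  simp only [eLabel, sup_image, Finset.add_sup hs]
  exact sup_congr rfl fun v _ => by simp [sum_add_distrib]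

lemma eLabel_image_add_eq_iff {q : ℕ} (a : Fin q → ℕ) {s t : Finset (Fin q → ℕ)}
    (hs : s.Nonempty) (ht : t.Nonempty) (A : Finset (Fin q)) :
    eLabel (s.image (a + ·)) A = eLabel (t.image (a + ·)) A ↔ eLabel s A = eLabel t A := by
  rw [eLabel_image_add a hs, eLabel_image_add a ht, add_right_inj]

lemma forall_mem_image_add_sum_eq_iff {q r' s : ℕ} {a : Fin q → ℕ} (ha : ∑ i, a i = r')
    (τ : Finset (Fin q → ℕ)) :
    (∀ b ∈ τ.image (a + ·), ∑ i, b i = r' + s) ↔ ∀ v ∈ τ, ∑ i, v i = s := by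
  simp [sum_add_distrib, ha]

lemma sum_erase_eq_sub {q r : ℕ} {c : Fin q → ℕ} (hc : ∑ i, c i = r) (i : Fin q) :
    ∑ j ∈ univ.erase i, c j = r - c i := by
  have := add_sum_erase univ c (mem_univ i)
  omega

lemma le_of_mem_of_eLabel_eq {q r : ℕ} {a : Fin q → ℕ} {ρ τ : Finset (Fin q → ℕ)}
    (hρ : ρ.Nonempty) (hρr : ∀ b ∈ ρ, ∑ i, b i = r) (hτr : ∀ c ∈ τ, ∑ i, c i = r)
    (hlab : ∀ A : Finset (Fin q), A.Nonempty → eLabel τ A = eLabel ρ A)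
    (haρ : ∀ b ∈ ρ, a ≤ b) : ∀ c ∈ τ, a ≤ c := by
  intro c hc i
  change a i ≤ c i
  have hlab' : eLabel τ (univ.erase i) = eLabel ρ (univ.erase i) := by
    rcases (univ.erase i).eq_empty_or_nonempty with hA | hA
    · rw [hA, eLabel_empty, eLabel_empty]
    · exact hlab _ hA
  have hτ : r - c i ≤ eLabel τ (univ.erase i) := by
    rw [← sum_erase_eq_sub (hτr c hc) i]
    exact le_sup (f := fun b => ∑ j ∈ univ.erase i, b j) hc
  have hρ' : eLabel ρ (univ.erase i) ≤ r - a i := by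
    refine Finset.sup_le fun b hb => ?_
    rw [sum_erase_eq_sub (hρr b hb) i]
    exact tsub_le_tsub_left (haρ b hb i) r
  have hcr : c i ≤ r := hτr c hc ▸ single_le_sum (fun j _ => Nat.zero_le (c j)) (mem_univ i)
  obtain ⟨b, hb⟩ := hρ
  have har : a i ≤ r :=
    (haρ b hb i).trans (hρr b hb ▸ single_le_sum (fun j _ => Nat.zero_le (b j)) (mem_univ i))
  omega

lemma exists_eq_image_add_of_le {q : ℕ} {a : Fin q → ℕ} {τ : Finset (Fin q → ℕ)}
    (h : ∀ c ∈ τ, a ≤ c) : ∃ τ' : Finset (Fin q → ℕ), τ = τ'.image (a + ·) := by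
  refine ⟨τ.image (· - a), ?_⟩
  rw [image_image]
  conv_lhs => rw [← image_id (s := τ)]
  exact image_congr fun c hc => (add_tsub_cancel_of_le (h c hc)).symm

lemma isScarf_of_isScarf_image_add {q r' s : ℕ} {a : Fin q → ℕ} (ha : ∑ i, a i = r')
    {σ : Finset (Fin q → ℕ)} (h : IsScarf q (r' + s) (σ.image (a + ·))) : IsScarf q s σ := by
  obtain ⟨hne, hsum, huniq⟩ := h
  have hσ : σ.Nonempty := image_nonempty.mp hne
  refine ⟨hσ, (forall_mem_image_add_sum_eq_iff ha σ).mp hsum, fun τ hτ hτr hlab => ?_⟩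
  refine image_injective (add_right_injective a) (huniq _ (hτ.image _)
    ((forall_mem_image_add_sum_eq_iff ha τ).mpr hτr) fun A hA => ?_)
  exact (eLabel_image_add_eq_iff a hτ hσ A).mpr (hlab A hA)

lemma isScarf_image_add {q r' s : ℕ} {a : Fin q → ℕ} (ha : ∑ i, a i = r')
    {σ : Finset (Fin q → ℕ)} (h : IsScarf q s σ) : IsScarf q (r' + s) (σ.image (a + ·)) := by
  obtain ⟨hσ, hσr, huniq⟩ := h
  have hσr' := (forall_mem_image_add_sum_eq_iff ha σ).mpr hσr
  refine ⟨hσ.image _, hσr', fun τ hτ hτr hlab => ?_⟩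
  have hle : ∀ c ∈ τ, a ≤ c := le_of_mem_of_eLabel_eq (hσ.image _) hσr' hτr hlab
    (forall_mem_image.mpr fun _ _ => le_self_add)
  obtain ⟨τ', rfl⟩ := exists_eq_image_add_of_le hle
  have hτ' : τ'.Nonempty := image_nonempty.mp hτ
  rw [huniq τ' hτ' ((forall_mem_image_add_sum_eq_iff ha τ').mp hτr)
    fun A hA => (eLabel_image_add_eq_iff a hτ' hσ A).mp (hlab A hA)]

lemma isScarf_image_add_iff {q r' s : ℕ} {a : Fin q → ℕ} (ha : ∑ i, a i = r')
    (σ : Finset (Fin q → ℕ)) : IsScarf q s σ ↔ IsScarf q (r' + s) (σ.image (a + ·)) :=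
  ⟨isScarf_image_add ha, isScarf_of_isScarf_image_add ha⟩

theorem stmt4_general (q r r' : ℕ) (hr : r' < r)
    (a : Fin q → ℕ) (ha : ∑ i, a i = r')
    (σ : Finset (Fin q → ℕ)) :
    IsScarf q (r - r') σ ↔ IsScarf q r (σ.image (fun v => a + v)) := by
  have hrr : r = r' + (r - r') := by omega
  conv_rhs => rw [hrr]
  exact isScarf_image_add_iff ha σ

/-- Proposition (p:Scarf-face): for `1 ≤ r' < r` and `a ∈ N^{r'}_q`, a nonempty
`σ ⊆ N^{r-r'}_q` is a Scarf face of `E_q^{r-r'}` iff its translate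
`a + σ = {a + v : v ∈ σ}` is a Scarf face of `E_q^r`. -/
theorem stmt4 (q r r' : ℕ) (hq : 1 ≤ q) (hr' : 1 ≤ r') (hr : r' < r)
    (a : Fin q → ℕ) (ha : ∑ i, a i = r')
    (σ : Finset (Fin q → ℕ)) (hσ : σ.Nonempty)
    (hσr : ∀ v ∈ σ, ∑ i, v i = r - r') :
    IsScarf q (r - r') σ ↔ IsScarf q r (σ.image (fun v => a + v)) :=
  stmt4_general q r r' hr a ha σ
end

section
/- For every a ∈ ℕ^q with r−q < |a| < r, the set aU is a facet of the Scarf complex of E_q^r: (i) aU is a Scarf face of E_q^r, and (ii) every Scarf face σ of E_q^r with aU ⊆ σ satisfies σ = aU. In particular, every nonempty subset of such a set aU is a Scarf face of E_q^r. -/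
/-!
Put `m = r - |a|`, so that `1 ≤ m < q` and `aU = {a + 1_S : |S| = m}`. For a set `X ⊆ aU`, the
label at `S` reaches `∑_S a + m` exactly when `a + 1_S ∈ X`, and the labels at the singletons and
at their complements confine every vertex of `N^r_q` lying below the label of `X` to `aU`. Hence a
nonempty subset of `aU` is the only subset of `N^r_q` with its label.

For maximality, let `c ∉ aU` lie in a Scarf face `σ ⊇ aU`. Some `m`-set `S` has
`∑_S c ≥ ∑_S a + m`, so `c` dominates `a + 1_S` at `S`; at any other `B`, swapping one element of
`S` gives an `m`-set `T ≠ S` with `|B ∩ T| ≥ |B ∩ S|`, so `a + 1_T` dominates `a + 1_S` at `B`.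
Thus deleting `a + 1_S` does not change the label of `σ`, contradicting the Scarf property.
-/

open Finset

def oneOn {q : ℕ} (S : Finset (Fin q)) : Fin q → ℕ := fun i => if i ∈ S then 1 else 0

theorem sum_add_oneOn {q : ℕ} (a : Fin q → ℕ) (S A : Finset (Fin q)) :
    ∑ i ∈ A, (a + oneOn S) i = ∑ i ∈ A, a i + #(A ∩ S) := by
  simp [oneOn, sum_add_distrib]

theorem add_oneOn_injective {q : ℕ} (a : Fin q → ℕ) :
    Function.Injective fun S : Finset (Fin q) => a + oneOn S := by
  intro S T h
  ext i
  have := congrFun (add_right_injective a h) i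
  by_cases hS : i ∈ S <;> by_cases hT : i ∈ T <;> simp [oneOn, hS, hT] at this ⊢

theorem exists_card_eq_sum_add_le_sum {ι : Type*} [Fintype ι] [DecidableEq ι] {m : ℕ}
    (a c : ι → ℕ) (hm : m ≤ Fintype.card ι) (hac : ∑ i, a i + m ≤ ∑ i, c i) :
    ∃ S : Finset ι, #S = m ∧ ∑ i ∈ S, a i + m ≤ ∑ i ∈ S, c i := by
  set P := univ.filter fun i => a i < c i
  by_cases hP : m ≤ #P
  · obtain ⟨S, hSP, hS⟩ := exists_subset_card_eq hP
    refine ⟨S, hS, ?_⟩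
    have : ∑ i ∈ S, (a i + 1) ≤ ∑ i ∈ S, c i :=
      sum_le_sum fun i hi => (mem_filter.1 (hSP hi)).2
    simpa [sum_add_distrib, hS] using this
  · obtain ⟨S, hPS, -, hS⟩ :=
      exists_subsuperset_card_eq (n := m) (subset_univ P) (by omega) (by simpa using hm)
    refine ⟨S, hS, ?_⟩
    -- the whole surplus of `c` over `a` lies in `S ⊇ P`
    have hout : ∑ i ∈ Sᶜ, c i ≤ ∑ i ∈ Sᶜ, a i :=
      sum_le_sum fun i hi => not_lt.1 fun h =>
        mem_compl.1 hi (hPS (mem_filter.2 ⟨mem_univ i, h⟩))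
    have := sum_add_sum_compl S a
    have := sum_add_sum_compl S c
    omega

theorem exists_ne_card_eq_card_inter_le {ι : Type*} [Fintype ι] [DecidableEq ι]
    {S B : Finset ι} (hS : S.Nonempty) (hSu : S ≠ univ) (hBS : B ≠ S) :
    ∃ T : Finset ι, T ≠ S ∧ #T = #S ∧ #(B ∩ S) ≤ #(B ∩ T) := by
  obtain ⟨i, hi, j, hj, hij⟩ : ∃ i ∈ S, ∃ j ∉ S, i ∈ B → j ∈ B := by
    by_cases hSB : S ⊆ B
    · obtain ⟨j, hjB, hjS⟩ := not_subset.1 fun hBS' => hBS (Subset.antisymm hBS' hSB)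
      obtain ⟨i, hi⟩ := hS
      exact ⟨i, hi, j, hjS, fun _ => hjB⟩
    · obtain ⟨i, hiS, hiB⟩ := not_subset.1 hSB
      obtain ⟨j, hj⟩ : ∃ j, j ∉ S := by simpa [eq_univ_iff_forall] using hSu
      exact ⟨i, hiS, j, hj, fun h => absurd h hiB⟩
  refine ⟨S.map (Equiv.swap i j).toEmbedding, fun h => hj ?_, card_map _, ?_⟩
  · rw [← h, mem_map_equiv]
    simpa using hi
  · rw [inter_comm B, inter_comm B]
    refine card_le_card_of_injOn (Equiv.swap i j) (fun x hx => ?_) (Equiv.injective _).injOn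
    obtain ⟨hxS, hxB⟩ := mem_inter.1 hx
    refine mem_inter.2 ⟨by simpa [mem_map_equiv] using hxS, ?_⟩
    obtain rfl | hxi := eq_or_ne x i
    · simpa using hij hxB
    · rwa [Equiv.swap_apply_of_ne_of_ne hxi (ne_of_mem_of_not_mem hxS hj)]

theorem IsScarf.exists_sum_lt {q r : ℕ} {σ : Finset (Fin q → ℕ)} (hσ : IsScarf q r σ)
    {b : Fin q → ℕ} (hb : b ∈ σ) (hne : (σ.erase b).Nonempty) :
    ∃ A : Finset (Fin q), A.Nonempty ∧ ∀ d ∈ σ.erase b, ∑ i ∈ A, d i < ∑ i ∈ A, b i := by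
  by_contra! h
  have hlab : ∀ A : Finset (Fin q), A.Nonempty → eLabel (σ.erase b) A = eLabel σ A := by
    intro A hA
    refine le_antisymm (sup_mono (erase_subset b σ)) (Finset.sup_le fun d hd => ?_)
    obtain rfl | hdb := eq_or_ne d b
    · obtain ⟨d', hd', hle⟩ := h A hA
      exact hle.trans (le_sup (f := fun d => ∑ i ∈ A, d i) hd')
    · exact le_sup (f := fun d => ∑ i ∈ A, d i) (mem_erase.2 ⟨hdb, hd⟩)
  have heq := hσ.2.2 _ hne (fun d hd => hσ.2.1 d (mem_of_mem_erase hd)) hlab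
  have hb' := notMem_erase b σ
  rw [heq] at hb'
  exact hb' hb

section aUF

variable {q r : ℕ} {a : Fin q → ℕ}

theorem mem_aUF_iff (hs : ∑ i, a i ≤ r) {c : Fin q → ℕ} :
    c ∈ aUF q r a ↔ ∃ S : Finset (Fin q), #S = r - ∑ i, a i ∧ a + oneOn S = c := by
  simp only [aUF, mem_filter, mem_Icc, Pi.le_def, Pi.add_apply, Pi.one_apply]
  constructor
  · rintro ⟨⟨hl, hu⟩, hc⟩
    set S := univ.filter fun i => a i < c i
    have hcS : a + oneOn S = c := by
      funext i
      have := hl i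
      have := hu i
      by_cases h : a i < c i <;> simp [oneOn, S, h] <;> omega
    have := sum_add_oneOn a S univ
    rw [hcS, univ_inter] at this
    exact ⟨S, by omega, hcS⟩
  · rintro ⟨S, hS, rfl⟩
    have := sum_add_oneOn a S univ
    rw [univ_inter] at this
    refine ⟨⟨fun i => ?_, fun i => ?_⟩, by omega⟩ <;> simp only [Pi.add_apply, oneOn] <;>
      split <;> omega

theorem aUF_nonempty (hs : ∑ i, a i ≤ r) (hrq : r ≤ q + ∑ i, a i) : (aUF q r a).Nonempty := by
  obtain ⟨S, -, hS⟩ :=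
    exists_subset_card_eq (s := (univ : Finset (Fin q))) (n := r - ∑ i, a i) (by simp; omega)
  exact ⟨_, (mem_aUF_iff hs).2 ⟨S, hS, rfl⟩⟩

theorem mem_aUF_of_sum_le_eLabel (hq : 2 ≤ q) (hs : ∑ i, a i ≤ r) {τ : Finset (Fin q → ℕ)}
    (hτ : τ ⊆ aUF q r a)
    {c : Fin q → ℕ} (hc : ∑ i, c i = r)
    (hle : ∀ A : Finset (Fin q), A.Nonempty → ∑ i ∈ A, c i ≤ eLabel τ A) :
    c ∈ aUF q r a := by
  have hτ' : ∀ d ∈ τ, (∀ i, a i ≤ d i) ∧ (∀ i, d i ≤ a i + 1) ∧ ∑ i, d i = r := fun d hd => by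
    simpa [aUF, Pi.le_def, and_assoc] using hτ hd
  simp only [aUF, mem_filter, mem_Icc, Pi.le_def, Pi.add_apply, Pi.one_apply]
  refine ⟨⟨fun i => ?_, fun i => ?_⟩, hc⟩
  · have hA : (univ.erase i).Nonempty := by
      rw [← card_pos, card_erase_of_mem (mem_univ i), card_univ, Fintype.card_fin]
      omega
    have hbound : ∑ j ∈ univ.erase i, c j ≤ r - a i := by
      refine (hle _ hA).trans (Finset.sup_le fun d hd => ?_)
      have := sum_erase_add univ d (mem_univ i)
      have := (hτ' d hd).1 i
      have := (hτ' d hd).2.2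
      omega
    have := sum_erase_add univ c (mem_univ i)
    have := single_le_sum (fun j _ => Nat.zero_le (a j)) (mem_univ i)
    omega
  · have := (hle {i} (singleton_nonempty i)).trans
      (Finset.sup_le fun d hd => by simpa using (hτ' d hd).2.1 i)
    simpa using this

theorem add_oneOn_mem_iff_le_eLabel (hs : ∑ i, a i ≤ r) {X : Finset (Fin q → ℕ)}
    (hX : X ⊆ aUF q r a) {S : Finset (Fin q)} (hS : #S = r - ∑ i, a i) (hSne : S.Nonempty) :
    a + oneOn S ∈ X ↔ ∑ i ∈ S, a i + #S ≤ eLabel X S := by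
  constructor
  · intro h
    calc ∑ i ∈ S, a i + #S = ∑ i ∈ S, (a + oneOn S) i := by rw [sum_add_oneOn, inter_self]
      _ ≤ eLabel X S := le_sup (f := fun d => ∑ i ∈ S, d i) h
  · intro h
    obtain ⟨d, hd, hle⟩ := (Finset.le_sup_iff (by
      have := hSne.card_pos
      simp only [bot_eq_zero']
      omega)).1 h
    obtain ⟨T, hT, rfl⟩ := (mem_aUF_iff hs).1 (hX hd)
    rw [sum_add_oneOn] at hle
    have hST : S ⊆ T := inter_eq_left.1 (eq_of_subset_of_card_le inter_subset_left (by omega))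
    rwa [eq_of_subset_of_card_le hST (by omega)]

theorem isScarf_of_subset_aUF (h1 : r < q + ∑ i, a i) (h2 : ∑ i, a i < r)
    {τ : Finset (Fin q → ℕ)} (hne : τ.Nonempty) (hτ : τ ⊆ aUF q r a) : IsScarf q r τ := by
  refine ⟨hne, fun c hc => (mem_filter.1 (hτ hc)).2, fun ρ _ hρ hlab => ?_⟩
  have hρτ : ρ ⊆ aUF q r a := fun c hc =>
    mem_aUF_of_sum_le_eLabel (by omega) h2.le hτ (hρ c hc) fun A hA =>
      hlab A hA ▸ le_sup (f := fun d => ∑ i ∈ A, d i) hc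
  ext c
  by_cases hc : c ∈ aUF q r a
  · obtain ⟨S, hS, rfl⟩ := (mem_aUF_iff h2.le).1 hc
    have hSne : S.Nonempty := card_pos.1 (by omega)
    rw [add_oneOn_mem_iff_le_eLabel h2.le hρτ hS hSne,
      add_oneOn_mem_iff_le_eLabel h2.le hτ hS hSne, hlab S hSne]
  · exact iff_of_false (fun h => hc (hρτ h)) (fun h => hc (hτ h))

theorem eq_aUF_of_isScarf (h1 : r < q + ∑ i, a i) (h2 : ∑ i, a i < r)
    {σ : Finset (Fin q → ℕ)} (hσ : IsScarf q r σ) (hsub : aUF q r a ⊆ σ) : σ = aUF q r a := by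
  refine Subset.antisymm (fun c hc => ?_) hsub
  by_contra hcU
  obtain ⟨S, hS, hSc⟩ := exists_card_eq_sum_add_le_sum (m := r - ∑ i, a i) a c
    (by simp; omega) (by rw [hσ.2.1 c hc]; omega)
  have hbU : a + oneOn S ∈ aUF q r a := (mem_aUF_iff h2.le).2 ⟨S, hS, rfl⟩
  have hcb : c ∈ σ.erase (a + oneOn S) := mem_erase.2 ⟨fun h => hcU (h ▸ hbU), hc⟩
  obtain ⟨B, -, hB⟩ := hσ.exists_sum_lt (hsub hbU) ⟨c, hcb⟩
  obtain rfl | hBS := eq_or_ne B S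
  · have := hB c hcb
    rw [sum_add_oneOn, inter_self] at this
    omega
  · obtain ⟨T, hTS, hT, hle⟩ := exists_ne_card_eq_card_inter_le (card_pos.1 (by omega))
      (fun h => by rw [h, card_univ, Fintype.card_fin] at hS; omega) hBS
    have hTU : a + oneOn T ∈ aUF q r a := (mem_aUF_iff h2.le).2 ⟨T, hT.trans hS, rfl⟩
    have := hB _ (mem_erase.2 ⟨fun h => hTS (add_oneOn_injective a h), hsub hTU⟩)
    rw [sum_add_oneOn, sum_add_oneOn] at this
    omega

end aUF

theorem stmt8_general (q r : ℕ) (a : Fin q → ℕ)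
    (h1 : r < q + ∑ i, a i) (h2 : ∑ i, a i < r) :
    IsScarf q r (aUF q r a) ∧
    (∀ σ : Finset (Fin q → ℕ), IsScarf q r σ → aUF q r a ⊆ σ → σ = aUF q r a) ∧
    (∀ τ : Finset (Fin q → ℕ), τ.Nonempty → τ ⊆ aUF q r a → IsScarf q r τ) :=
  ⟨isScarf_of_subset_aUF h1 h2 (aUF_nonempty h2.le h1.le) Subset.rfl,
    fun _ hσ hsub => eq_aUF_of_isScarf h1 h2 hσ hsub,
    fun _ hne hsub => isScarf_of_subset_aUF h1 h2 hne hsub⟩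

/-- Theorem (t:f-vector): for `a ∈ ℕ^q` with `r - q < |a| < r` (written
`r < q + |a|` and `|a| < r`), the set `aU` is a facet of the Scarf complex of
`E_q^r`: it is a Scarf face, every Scarf face containing it equals it, and
every nonempty subset of it is again a Scarf face. -/
theorem stmt8 (q r : ℕ) (hq : 1 ≤ q) (hr : 1 ≤ r) (a : Fin q → ℕ)
    (h1 : r < q + ∑ i, a i) (h2 : ∑ i, a i < r) :
    IsScarf q r (aUF q r a) ∧
    (∀ σ : Finset (Fin q → ℕ), IsScarf q r σ → aUF q r a ⊆ σ → σ = aUF q r a) ∧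
    (∀ τ : Finset (Fin q → ℕ), τ.Nonempty → τ ⊆ aUF q r a → IsScarf q r τ) :=
  stmt8_general q r a h1 h2
end

section
/- Assume 1 ≤ q ≤ 4 and let a, b, c, d ∈ N^r_q. If the two-element sets {a, d} and {b, d} are Scarf faces of E_q^r (in particular a ≠ d and b ≠ d), and ∑_{i∈A} c_i ≤ max(∑_{i∈A} a_i, ∑_{i∈A} b_i) for every nonempty A ⊆ [q] (i.e., ε^c divides lcm(ε^a, ε^b)), then {c, d} is a Scarf face of E_q^r. -/
/-!
Write `u = x - d ∈ ℤ^q` for a pair `x, d ∈ N^r_q`. Any `e ∈ N^r_q` with `ε^e ∣ lcm(ε^x, ε^d)`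
gives `w = e - d` whose subset sums lie between `0` and those of `u`, and conversely; so `{x, d}`
is a Scarf face exactly when `u` is *rigid*: `0` and `u` are the only such `w`.
For `q ≤ 4` a rigid `u` has all entries in `{-1, 0, 1}`: otherwise `e_i - e_j`, for `i` a maximal
and `j` a minimal entry, works, except when `u = m (1, -1, -1, 1)` up to order, where `u / m` works.
Conversely every `u ∈ {-1, 0, 1}^q` with zero sum is rigid. Since `ε^c ∣ lcm(ε^a, ε^b)` squeezes
`c` coordinatewise between `a` and `b`, the vector `c - d` inherits entries in `{-1, 0, 1}`.
-/

open Finset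

section Subsums

variable {ι : Type*}

def SubsumsBetween (u w : ι → ℤ) : Prop :=
  ∀ A : Finset ι, ∑ i ∈ A, w i ∈ Set.uIcc 0 (∑ i ∈ A, u i)

def IsRigid (u : ι → ℤ) : Prop :=
  ∀ w, SubsumsBetween u w → w = 0 ∨ w = u

variable {u w : ι → ℤ}

lemma sum_compl_eq_neg [Fintype ι] [DecidableEq ι] (hu : ∑ i, u i = 0) (A : Finset ι) :
    ∑ i ∈ Aᶜ, u i = -∑ i ∈ A, u i := by
  linarith [sum_add_sum_compl A u]

namespace SubsumsBetween

lemma apply_mem (h : SubsumsBetween u w) (i : ι) : w i ∈ Set.uIcc 0 (u i) := by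
  simpa using h {i}

lemma sum_eq_zero [Fintype ι] (h : SubsumsBetween u w) (hu : ∑ i, u i = 0) : ∑ i, w i = 0 := by
  simpa [hu] using h univ

lemma neg (h : SubsumsBetween u w) : SubsumsBetween (-u) (-w) := by
  intro A
  have := h A
  simp only [Pi.neg_apply, sum_neg_distrib, Set.mem_uIcc] at this ⊢
  omega

lemma add_eq_zero [DecidableEq ι] {i j : ι} (h : SubsumsBetween u w) (hij : i ≠ j)
    (hu : u i + u j = 0) : w i + w j = 0 := by
  simpa [sum_pair hij, hu] using h {i, j}

end SubsumsBetween

lemma subsumsBetween_smul_self {m : ℤ} (hm : 1 ≤ m) (s : ι → ℤ) : SubsumsBetween (m • s) s := by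
  intro A
  simp only [Pi.smul_apply, smul_eq_mul, ← mul_sum, Set.mem_uIcc]
  rcases le_total 0 (∑ i ∈ A, s i) with h | h
  · exact Or.inl ⟨h, by nlinarith⟩
  · exact Or.inr ⟨by nlinarith, h⟩

lemma subsumsBetween_single_sub_single [Fintype ι] [DecidableEq ι] {i j : ι}
    (hu : ∑ k, u k = 0)
    (h : ∀ A : Finset ι, i ∈ A → j ∉ A → 1 ≤ ∑ k ∈ A, u k) :
    SubsumsBetween u (Pi.single i 1 - Pi.single j 1) := by
  intro A
  simp only [Pi.sub_apply, sum_sub_distrib, sum_pi_single', Set.mem_uIcc]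
  by_cases hi : i ∈ A <;> by_cases hj : j ∈ A <;> simp only [hi, hj, if_true, if_false]
  · omega
  · have := h A hi hj
    omega
  · have := h Aᶜ (mem_compl.mpr hi) (fun h' => mem_compl.mp h' hj)
    rw [sum_compl_eq_neg hu] at this
    omega
  · omega

lemma IsRigid.neg (h : IsRigid u) : IsRigid (-u) := by
  intro w hw
  rcases h (-w) (by simpa using hw.neg) with h0 | hu
  · exact Or.inl (neg_eq_zero.mp h0)
  · exact Or.inr (by rw [← hu, neg_neg])

lemma exists_eq_neg_of_sum_eq_zero [Fintype ι] (hu : ∑ i, u i = 0) (h1 : ∀ i, |u i| ≤ 1)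
    {j : ι} (hj : u j ≠ 0) : ∃ n, u n = -u j := by
  wlog hpos : 0 < u j generalizing u with H
  · obtain ⟨n, hn⟩ := H (u := -u) (by simp [hu]) (by simpa using h1) (by simpa using hj)
      (by simp only [Pi.neg_apply]; omega)
    exact ⟨n, by simp only [Pi.neg_apply] at hn; omega⟩
  by_contra! hcon
  have hnonneg : ∀ i ∈ univ, 0 ≤ u i := fun i _ => by
    have := hcon i
    have := abs_le.mp (h1 i)
    have := abs_le.mp (h1 j)
    omega
  have := sum_pos' hnonneg ⟨j, mem_univ j, hpos⟩
  omega

theorem isRigid_of_abs_le_one [Fintype ι] [DecidableEq ι] (hu : ∑ i, u i = 0)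
    (h1 : ∀ i, |u i| ≤ 1) : IsRigid u := by
  intro w hw
  have hw01 : ∀ k, w k = 0 ∨ w k = u k := fun k => by
    have := Set.mem_uIcc.mp (hw.apply_mem k)
    have := abs_le.mp (h1 k)
    omega
  have opp : ∀ a b, u a ≠ 0 → u a + u b = 0 → w a + w b = 0 := fun a b ha hab =>
    hw.add_eq_zero (by rintro rfl; omega) hab
  by_contra! hne
  obtain ⟨j, hj⟩ := Function.ne_iff.mp hne.1
  obtain ⟨i, hi⟩ := Function.ne_iff.mp hne.2
  have hwj : w j = u j := (hw01 j).resolve_left hj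
  have hwi : w i = 0 := (hw01 i).resolve_right hi
  have huj : u j ≠ 0 := hwj ▸ hj
  obtain ⟨n, hn⟩ := exists_eq_neg_of_sum_eq_zero hu h1 huj
  have hwn := opp j n huj (by omega)
  have := abs_le.mp (h1 i)
  have := abs_le.mp (h1 j)
  -- `u i = ± u j`; pair `i` with `j` or with `n` accordingly.
  rcases (show u i + u j = 0 ∨ u i = u j by omega) with hij | hij
  · have := opp i j (by omega) hij
    omega
  · have := opp i n (by omega) (by omega)
    omega

lemma eq_or_eq_neg_of_sum_nonpos [Fintype ι] [DecidableEq ι] (hcard : Fintype.card ι ≤ 4)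
    (hu : ∑ k, u k = 0) {i j : ι} (hi : ∀ k, u k ≤ u i) (hj : ∀ k, u j ≤ u k)
    (hui : 0 < u i) (huj : u j < 0) {A : Finset ι} (hiA : i ∈ A) (hjA : j ∉ A)
    (hA : ∑ k ∈ A, u k ≤ 0) (k : ι) : u k = u i ∨ u k = -u i := by
  set B := A.erase i
  set C := (insert j A)ᶜ
  have hB : u i + ∑ k ∈ B, u k = ∑ k ∈ A, u k := add_sum_erase A u hiA
  have hC : ∑ k ∈ C, u k = -(u j + ∑ k ∈ A, u k) := by
    rw [sum_compl_eq_neg hu, sum_insert hjA]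
  have hBne : B.Nonempty := nonempty_iff_ne_empty.mpr fun h => by
    rw [h, sum_empty] at hB
    omega
  have hCne : C.Nonempty := nonempty_iff_ne_empty.mpr fun h => by
    rw [h, sum_empty] at hC
    omega
  -- `univ` is split into `{i, j}`, `B` and `C`, so both `B` and `C` are singletons.
  have hcards : #(insert j A) + #C = Fintype.card ι := card_add_card_compl _
  have hcardA : #(insert j A) = #B + 2 := by
    rw [card_insert_of_notMem hjA, ← card_erase_add_one hiA]
  have := hBne.card_pos
  have := hCne.card_pos
  obtain ⟨k₀, hk₀⟩ := card_eq_one.mp (show #B = 1 by omega)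
  obtain ⟨l₀, hl₀⟩ := card_eq_one.mp (show #C = 1 by omega)
  rw [hk₀, sum_singleton] at hB
  rw [hl₀, sum_singleton] at hC
  have hvals : u j = -u i ∧ u k₀ = -u i ∧ u l₀ = u i := by
    have := hi l₀
    have := hj k₀
    omega
  have hk : k = j ∨ k = i ∨ k = k₀ ∨ k = l₀ := by
    have : k ∈ insert j (insert i B) ∪ C := by
      simp only [B, C, insert_erase hiA, union_compl, mem_univ]
    simpa [hk₀, hl₀] using this
  rcases hk with rfl | rfl | rfl | rfl <;> omega

lemma exists_subsumsBetween_ne [Fintype ι] [DecidableEq ι] (hcard : Fintype.card ι ≤ 4)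
    (hu : ∑ i, u i = 0) {k : ι} (hk : 2 ≤ u k) :
    ∃ w, SubsumsBetween u w ∧ w ≠ 0 ∧ w ≠ u := by
  obtain ⟨i, -, hi⟩ := exists_max_image univ u ⟨k, mem_univ k⟩
  obtain ⟨j, -, hj⟩ := exists_min_image univ u ⟨k, mem_univ k⟩
  have hui : 2 ≤ u i := hk.trans (hi k (mem_univ k))
  have huj : u j < 0 := by
    by_contra! h
    have := sum_pos' (fun t _ => h.trans (hj t (mem_univ t))) ⟨i, mem_univ i, by omega⟩
    omega
  by_cases hgood : ∀ A : Finset ι, i ∈ A → j ∉ A → 1 ≤ ∑ k ∈ A, u k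
  · have hij : i ≠ j := by
      rintro rfl
      omega
    refine ⟨_, subsumsBetween_single_sub_single hu hgood, fun h => ?_, fun h => ?_⟩
    · simpa [hij] using congrFun h i
    · have := congrFun h i
      simp only [Pi.sub_apply, Pi.single_eq_same, Pi.single_eq_of_ne hij] at this
      omega
  · push Not at hgood
    obtain ⟨A, hiA, hjA, hA⟩ := hgood
    have hpm := eq_or_eq_neg_of_sum_nonpos hcard hu (fun t => hi t (mem_univ t))
      (fun t => hj t (mem_univ t)) (by omega) huj hiA hjA (by omega)
    have hsmul : u = u i • fun t => (u t).sign := by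
      funext t
      rcases hpm t with h | h
      · simp [h, Int.sign_eq_one_of_pos (show 0 < u i by omega)]
      · simp [h, Int.sign_eq_neg_one_of_neg (show -u i < 0 by omega)]
    have hsign : (u i).sign = 1 := Int.sign_eq_one_of_pos (by omega)
    refine ⟨fun t => (u t).sign, ?_, fun h => ?_, fun h => ?_⟩
    · have := subsumsBetween_smul_self (m := u i) (by omega) (fun t => (u t).sign)
      rwa [← hsmul] at this
    · simpa [hsign] using congrFun h i
    · have := congrFun h i
      simp only [hsign] at this
      omega

theorem IsRigid.abs_le_one [Fintype ι] [DecidableEq ι] (h : IsRigid u)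
    (hcard : Fintype.card ι ≤ 4) (hu : ∑ i, u i = 0) (k : ι) : |u k| ≤ 1 := by
  have hlt : ∀ v : ι → ℤ, IsRigid v → ∑ i, v i = 0 → v k < 2 := fun v hv hvs => by
    by_contra! hk
    obtain ⟨w, hw, hw0, hwv⟩ := exists_subsumsBetween_ne hcard hvs hk
    rcases hv w hw with h | h <;> contradiction
  have := hlt u h hu
  have := hlt (-u) h.neg (by simp [hu])
  simp only [Pi.neg_apply] at this
  rw [abs_le]
  omega

lemma min_le_sum_of_le_max [Fintype ι] [DecidableEq ι] {x y c : ι → ℕ}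
    (hx : ∑ i, x i = ∑ i, c i) (hy : ∑ i, y i = ∑ i, c i)
    (h : ∀ A : Finset ι, A.Nonempty → ∑ i ∈ A, c i ≤ max (∑ i ∈ A, x i) (∑ i ∈ A, y i))
    (A : Finset ι) : min (∑ i ∈ A, x i) (∑ i ∈ A, y i) ≤ ∑ i ∈ A, c i := by
  have := sum_add_sum_compl A c
  have := sum_add_sum_compl A x
  have := sum_add_sum_compl A y
  rcases Aᶜ.eq_empty_or_nonempty with hA | hA
  · simp only [hA, sum_empty] at *
    omega
  · have := h Aᶜ hA
    omega

lemma subsumsBetween_sub_of_le_max [Fintype ι] [DecidableEq ι] {x d e : ι → ℕ}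
    (hx : ∑ i, x i = ∑ i, e i) (hd : ∑ i, d i = ∑ i, e i)
    (h : ∀ A : Finset ι, A.Nonempty → ∑ i ∈ A, e i ≤ max (∑ i ∈ A, x i) (∑ i ∈ A, d i)) :
    SubsumsBetween (fun i => (x i : ℤ) - d i) (fun i => (e i : ℤ) - d i) := by
  intro A
  have hmin := min_le_sum_of_le_max hx hd h A
  have hmax : ∑ i ∈ A, e i ≤ max (∑ i ∈ A, x i) (∑ i ∈ A, d i) := by
    rcases A.eq_empty_or_nonempty with rfl | hA
    · simp
    · exact h A hA
  simp only [sum_sub_distrib, ← Nat.cast_sum, Set.mem_uIcc]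
  omega

end Subsums

section Scarf

variable {q r : ℕ}

lemma eLabel_pair (x y : Fin q → ℕ) (A : Finset (Fin q)) :
    eLabel {x, y} A = max (∑ i ∈ A, x i) (∑ i ∈ A, y i) := by
  simp [eLabel]

lemma IsScarf.mem_of_le_eLabel {σ : Finset (Fin q → ℕ)} (hσ : IsScarf q r σ)
    {e : Fin q → ℕ} (he : ∑ i, e i = r)
    (hle : ∀ A : Finset (Fin q), A.Nonempty → ∑ i ∈ A, e i ≤ eLabel σ A) : e ∈ σ := by
  have hins : insert e σ = σ := hσ.2.2 _ (insert_nonempty e σ)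
    (forall_mem_insert _ _ _ |>.mpr ⟨he, hσ.2.1⟩)
    (fun A hA => by simpa [eLabel, sup_insert] using hle A hA)
  exact hins ▸ mem_insert_self e σ

lemma IsScarf.isRigid {x d : Fin q → ℕ} (h : IsScarf q r {x, d}) :
    IsRigid (fun i => (x i : ℤ) - d i) := by
  have hx := h.2.1 x (mem_insert_self x {d})
  have hd := h.2.1 d (mem_insert_of_mem (mem_singleton_self d))
  intro w hw
  have hnonneg : ∀ i, 0 ≤ (d i : ℤ) + w i := fun i => by
    have := Set.mem_uIcc.mp (hw.apply_mem i)
    omega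
  set e : Fin q → ℕ := fun i => ((d i : ℤ) + w i).toNat
  have he : ∀ i, (e i : ℤ) = d i + w i := fun i => Int.toNat_of_nonneg (hnonneg i)
  have hsum_e : ∀ A : Finset (Fin q), ((∑ i ∈ A, e i : ℕ) : ℤ) = ∑ i ∈ A, d i + ∑ i ∈ A, w i := by
    intro A
    push_cast [he]
    exact sum_add_distrib
  have hw0 : ∑ i, w i = 0 := hw.sum_eq_zero (by simp [sum_sub_distrib, ← Nat.cast_sum, hx, hd])
  have hmem : e ∈ ({x, d} : Finset (Fin q → ℕ)) := by
    refine h.mem_of_le_eLabel (by have := hsum_e univ; omega) fun A _ => ?_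
    have := Set.mem_uIcc.mp (hw A)
    have := hsum_e A
    simp only [sum_sub_distrib, ← Nat.cast_sum] at *
    rw [eLabel_pair]
    omega
  rcases mem_insert.mp hmem with hex | hed
  · refine Or.inr (funext fun i => ?_)
    have := he i
    have := congrFun hex i
    omega
  · refine Or.inl (funext fun i => ?_)
    have := he i
    have := congrFun (mem_singleton.mp hed) i
    simp only [Pi.zero_apply]
    omega

lemma mem_of_subset_pair_of_eLabel_eq {τ : Finset (Fin q → ℕ)} {x d : Fin q → ℕ}
    (hτ : τ ⊆ {x, d}) (hne : τ.Nonempty) (hsum : ∑ i, x i = ∑ i, d i)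
    (hlab : ∀ i, eLabel τ {i} = eLabel {x, d} {i}) : x ∈ τ := by
  by_contra hx
  have hτd : τ = {d} := by
    refine (subset_singleton_iff.mp fun e he => ?_).resolve_left hne.ne_empty
    rcases mem_insert.mp (hτ he) with rfl | hed
    · exact absurd he hx
    · exact hed
  have hle : ∀ i ∈ univ, x i ≤ d i := fun i _ => by
    have := hlab i
    rw [hτd, eLabel_pair] at this
    simp only [eLabel, sup_singleton, sum_singleton] at this
    omega
  have hxd : x = d := funext fun i => (sum_eq_sum_iff_of_le hle).mp hsum i (mem_univ i)
  exact hx (hxd ▸ hτd ▸ mem_singleton_self d)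

lemma isScarf_pair_of_isRigid {x d : Fin q → ℕ} (hx : ∑ i, x i = r) (hd : ∑ i, d i = r)
    (h : IsRigid (fun i => (x i : ℤ) - d i)) : IsScarf q r {x, d} := by
  refine ⟨insert_nonempty x {d}, by simp [hx, hd], fun τ hne hτ hlab => ?_⟩
  have hsub : τ ⊆ {x, d} := fun e he => by
    have hbetween := subsumsBetween_sub_of_le_max (e := e) (by rw [hx, hτ e he])
      (by rw [hd, hτ e he]) fun A hA => by
        rw [← eLabel_pair, ← hlab A hA]
        exact le_sup (f := fun a => ∑ i ∈ A, a i) he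
    rcases h _ hbetween with h0 | hex
    · refine mem_insert_of_mem (mem_singleton.mpr (funext fun i => ?_))
      have := congrFun h0 i
      simp only [Pi.zero_apply] at this
      omega
    · refine mem_insert.mpr (Or.inl (funext fun i => ?_))
      have := congrFun hex i
      omega
  have hlab_single : ∀ i, eLabel τ {i} = eLabel {x, d} {i} := fun i => hlab {i} (singleton_nonempty i)
  have hxτ := mem_of_subset_pair_of_eLabel_eq hsub hne (hx.trans hd.symm) hlab_single
  have hdτ := mem_of_subset_pair_of_eLabel_eq (pair_comm x d ▸ hsub) hne (hd.trans hx.symm)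
    (pair_comm x d ▸ hlab_single)
  exact Subset.antisymm hsub (insert_subset hxτ (singleton_subset_iff.mpr hdτ))

end Scarf

theorem stmt13_general (q r : ℕ) (hq4 : q ≤ 4)
    (a b c d : Fin q → ℕ)
    (ha : ∑ i, a i = r) (hb : ∑ i, b i = r)
    (hc : ∑ i, c i = r) (hd : ∑ i, d i = r)
    (had : IsScarf q r {a, d}) (hbd : IsScarf q r {b, d})
    (hdiv : ∀ A : Finset (Fin q), A.Nonempty →
      ∑ i ∈ A, c i ≤ max (∑ i ∈ A, a i) (∑ i ∈ A, b i)) :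
    IsScarf q r {c, d} := by
  have hcard : Fintype.card (Fin q) ≤ 4 := by simpa using hq4
  have hsum_sub : ∀ x : Fin q → ℕ, ∑ i, x i = r → ∑ i, ((x i : ℤ) - d i) = 0 := fun x hx => by
    simp [sum_sub_distrib, ← Nat.cast_sum, hx, hd]
  have hua := had.isRigid.abs_le_one hcard (hsum_sub a ha)
  have hub := hbd.isRigid.abs_le_one hcard (hsum_sub b hb)
  refine isScarf_pair_of_isRigid hc hd (isRigid_of_abs_le_one (hsum_sub c hc) fun i => ?_)
  have hlo := min_le_sum_of_le_max (ha.trans hc.symm) (hb.trans hc.symm) hdiv {i}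
  have hhi := hdiv {i} (singleton_nonempty i)
  simp only [sum_singleton] at hlo hhi
  have := abs_le.mp (hua i)
  have := abs_le.mp (hub i)
  rw [abs_le]
  omega

/-- Lemma (l:d): for `1 ≤ q ≤ 4`, if the two-element sets `{a, d}` and
`{b, d}` are Scarf faces of `E_q^r` and `ε^c ∣ lcm(ε^a, ε^b)`, then `{c, d}`
is a Scarf face of `E_q^r`. -/
theorem stmt13 (q r : ℕ) (hq1 : 1 ≤ q) (hq4 : q ≤ 4) (hr : 1 ≤ r)
    (a b c d : Fin q → ℕ)
    (ha : ∑ i, a i = r) (hb : ∑ i, b i = r)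
    (hc : ∑ i, c i = r) (hd : ∑ i, d i = r)
    (hadne : a ≠ d) (hbdne : b ≠ d)
    (had : IsScarf q r {a, d}) (hbd : IsScarf q r {b, d})
    (hdiv : ∀ A : Finset (Fin q), A.Nonempty →
      ∑ i ∈ A, c i ≤ max (∑ i ∈ A, a i) (∑ i ∈ A, b i)) :
    IsScarf q r {c, d} :=
  stmt13_general q r hq4 a b c d ha hb hc hd had hbd hdiv
end
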